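/- Let P₄(X) = X + X² + (4/5)X³ + (2/5)X⁴. Suppose 0 < a ≤ b ≤ c are real, A > 0 and B, C ≥ 0 are real, and C/c⁴ + B/b⁴ ≥ A/a⁴. Then for every real t, Re{ C·P₄(a/(c+it)) + B·P₄(a/(b+it)) − A·P₄(a/(a+it)) } ≥ 0. -/

import Mathlib

open Complex

noncomputable def P4 (X : ℂ) : ℂ := X + X ^ 2 + (4 / 5) * X ^ 3 + (2 / 5) * X ^ 4

/-!
Write `X = a / (u + t i)`. Clearing the denominator `(u² + t²)⁴`, the real part of `P₄(X)` exceeds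
`(16/5) a⁴ u⁴ / (u² + t²)⁴` by `a (u - a)` times a polynomial that is nonnegative for `0 ≤ a ≤ u`,
with equality at `u = a`. Since `u² / (u² + t²)` increases with `u`, this bound is at least
`m a⁴ / u⁴` where `m = (16/5) (a² / (a² + t²))⁴ = Re P₄(a / (a + t i))`. Hence
`C Re P₄(a / (c + t i)) + B Re P₄(a / (b + t i)) ≥ m a⁴ (C / c⁴ + B / b⁴) ≥ m A`.
-/

lemma re_P4 (z : ℂ) :
    (P4 z).re = z.re + (z.re ^ 2 - z.im ^ 2) + 4 / 5 * (z.re ^ 3 - 3 * z.re * z.im ^ 2)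
      + 2 / 5 * (z.re ^ 4 - 6 * z.re ^ 2 * z.im ^ 2 + z.im ^ 4) := by
  simp only [P4, pow_succ, pow_zero, one_mul, add_re, mul_re, mul_im]
  norm_num
  ring

/-- `(P4 (a / (u + t I))).re * (u² + t²)⁴`, expanded. -/
noncomputable def reP4Num (a u t : ℝ) : ℝ :=
  a * u * (u ^ 2 + t ^ 2) ^ 3 + a ^ 2 * (u ^ 2 - t ^ 2) * (u ^ 2 + t ^ 2) ^ 2
    + 4 / 5 * a ^ 3 * u * (u ^ 2 - 3 * t ^ 2) * (u ^ 2 + t ^ 2)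
    + 2 / 5 * a ^ 4 * (u ^ 4 - 6 * u ^ 2 * t ^ 2 + t ^ 4)

lemma re_P4_ofReal_div (a u t : ℝ) :
    (P4 (a / (u + t * I))).re = reP4Num a u t / (u ^ 2 + t ^ 2) ^ 4 := by
  by_cases hs : u ^ 2 + t ^ 2 = 0
  · obtain ⟨rfl, rfl⟩ : u = 0 ∧ t = 0 := by constructor <;> nlinarith [sq_nonneg u, sq_nonneg t]
    simp [P4, reP4Num]
  rw [re_P4]
  simp only [div_re, div_im, ofReal_re, ofReal_im, add_re, add_im, mul_re, mul_im, I_re, I_im,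
    normSq_add_mul_I]
  unfold reP4Num
  field_simp
  ring

lemma reP4Num_self (a t : ℝ) : reP4Num a a t = 16 / 5 * a ^ 8 := by
  unfold reP4Num; ring

lemma reP4Num_ge {a u : ℝ} (ha : 0 ≤ a) (hau : a ≤ u) (t : ℝ) :
    16 / 5 * a ^ 4 * u ^ 4 ≤ reP4Num a u t := by
  have key : reP4Num a u t - 16 / 5 * a ^ 4 * u ^ 4
      = a * (u - a) * (u ^ 4 * (u ^ 2 + 2 * a * u + 14 / 5 * a ^ 2)
          + u ^ 2 * (3 * u ^ 2 + 4 * a * u + 12 / 5 * a ^ 2) * t ^ 2 + t ^ 6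
          + (3 * u ^ 2 + 2 * a * u - 2 / 5 * a ^ 2) * t ^ 4) := by
    unfold reP4Num; ring
  have hu : 0 ≤ u := ha.trans hau
  have hquad : 0 ≤ (3 * u ^ 2 + 2 * a * u - 2 / 5 * a ^ 2) * t ^ 4 :=
    mul_nonneg (by nlinarith) (by positivity)
  rw [← sub_nonneg, key]
  exact mul_nonneg (mul_nonneg ha (sub_nonneg.2 hau)) (add_nonneg (by positivity) hquad)

lemma sq_div_sq_add_sq_mono {a u : ℝ} (ha : 0 ≤ a) (hau : a ≤ u) (t : ℝ) :
    a ^ 2 / (a ^ 2 + t ^ 2) ≤ u ^ 2 / (u ^ 2 + t ^ 2) := by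
  rcases ha.eq_or_lt with rfl | ha
  · simp only [ne_eq, OfNat.ofNat_ne_zero, not_false_eq_true, zero_pow, zero_add, zero_div]
    positivity
  have hu : 0 < u := ha.trans_le hau
  rw [div_le_div_iff₀ (by positivity) (by positivity)]
  nlinarith [mul_le_mul_of_nonneg_right (pow_le_pow_left₀ ha.le hau 2) (sq_nonneg t)]

lemma re_P4_ofReal_div_ge {a u : ℝ} (ha : 0 < a) (hau : a ≤ u) (t : ℝ) :
    16 / 5 * (a ^ 2 / (a ^ 2 + t ^ 2)) ^ 4 * (a ^ 4 / u ^ 4) ≤ (P4 (a / (u + t * I))).re := by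
  have hu : 0 < u := ha.trans_le hau
  calc 16 / 5 * (a ^ 2 / (a ^ 2 + t ^ 2)) ^ 4 * (a ^ 4 / u ^ 4)
      ≤ 16 / 5 * (u ^ 2 / (u ^ 2 + t ^ 2)) ^ 4 * (a ^ 4 / u ^ 4) := by
        gcongr 16 / 5 * ?_ ^ 4 * _
        exact sq_div_sq_add_sq_mono ha.le hau t
    _ = 16 / 5 * a ^ 4 * u ^ 4 / (u ^ 2 + t ^ 2) ^ 4 := by field_simp
    _ ≤ (P4 (a / (u + t * I))).re := by
        rw [re_P4_ofReal_div]
        gcongr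
        exact reP4Num_ge ha.le hau t

lemma re_P4_ofReal_div_self (a t : ℝ) :
    (P4 (a / (a + t * I))).re = 16 / 5 * (a ^ 2 / (a ^ 2 + t ^ 2)) ^ 4 := by
  rw [re_P4_ofReal_div, reP4Num_self, div_pow, ← pow_mul]
  ring

theorem P4_positivity_general (a b c A B C : ℝ) (ha : 0 < a) (hab : a ≤ b) (hbc : b ≤ c)
    (hB : 0 ≤ B) (hC : 0 ≤ C)
    (h : A / a ^ 4 ≤ C / c ^ 4 + B / b ^ 4) (t : ℝ) :
    0 ≤ ((C : ℂ) * P4 ((a : ℂ) / (c + t * I)) + (B : ℂ) * P4 ((a : ℂ) / (b + t * I))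
          - (A : ℂ) * P4 ((a : ℂ) / (a + t * I))).re := by
  simp only [sub_re, add_re, re_ofReal_mul, re_P4_ofReal_div_self, sub_nonneg]
  set m := 16 / 5 * (a ^ 2 / (a ^ 2 + t ^ 2)) ^ 4
  have hc := re_P4_ofReal_div_ge ha (hab.trans hbc) t
  have hb := re_P4_ofReal_div_ge ha hab t
  calc A * m = m * a ^ 4 * (A / a ^ 4) := by field_simp
    _ ≤ m * a ^ 4 * (C / c ^ 4 + B / b ^ 4) := by gcongr
    _ = C * (m * (a ^ 4 / c ^ 4)) + B * (m * (a ^ 4 / b ^ 4)) := by ring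
    _ ≤ _ := by gcongr

/-- If 0 < a ≤ b ≤ c, A > 0, B, C ≥ 0 and C/c⁴ + B/b⁴ ≥ A/a⁴, then for every real t,
Re{C·P₄(a/(c+it)) + B·P₄(a/(b+it)) − A·P₄(a/(a+it))} ≥ 0. -/
theorem P4_positivity (a b c A B C : ℝ) (ha : 0 < a) (hab : a ≤ b) (hbc : b ≤ c)
    (hA : 0 < A) (hB : 0 ≤ B) (hC : 0 ≤ C)
    (h : A / a ^ 4 ≤ C / c ^ 4 + B / b ^ 4) (t : ℝ) :
    0 ≤ ((C : ℂ) * P4 ((a : ℂ) / (c + t * I)) + (B : ℂ) * P4 ((a : ℂ) / (b + t * I))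
          - (A : ℂ) * P4 ((a : ℂ) / (a + t * I))).re :=
  P4_positivity_general a b c A B C ha hab hbc hB hC h t
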